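/- With notation as above (h ∈ ℝ^k mean-zero with E[h hᵀ] invertible, X scalar square-integrable), if k ≤ m and h is the truncation of a vector h' ∈ ℝ^m with E[h' h'ᵀ] invertible, then b'ᵀ C'⁻¹ b' ≥ bᵀ C⁻¹ b, where b' = E[X h'], C' = E[h' h'ᵀ]; i.e., the optimal information is monotone nondecreasing in the number of component estimating functions. -/

import Mathlib

open MeasureTheory Matrix

/-!
`C'` is the Gram matrix of the `h' i` in `L²(μ)`, hence positive semidefinite. For a positive
semidefinite invertible `A`, `bᵀA⁻¹b` is the maximum of `2 xᵀb - xᵀAx` over all `x`. The value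
`bᵀC⁻¹b` of the truncated problem is attained at `a = C⁻¹b`, and extending `a` by zero gives a
competitor for the full problem with the same value.
-/

namespace Matrix

variable {ι κ : Type*} [Fintype ι] [Fintype κ]

lemma extend_zero_dotProduct (e : ι ↪ κ) (a : ι → ℝ) (v : κ → ℝ) :
    Function.extend e a 0 ⬝ᵥ v = a ⬝ᵥ (v ∘ e) := by
  refine (Fintype.sum_of_injective e e.injective _ _ (fun j hj => ?_) (fun i => ?_)).symm
  · rw [Function.extend_apply' _ _ _ hj, Pi.zero_apply, zero_mul]
  · rw [e.injective.extend_apply, Function.comp_apply]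

lemma mulVec_extend_zero_comp (A : Matrix κ κ ℝ) (e : ι ↪ κ) (a : ι → ℝ) :
    (A *ᵥ Function.extend e a 0) ∘ e = A.submatrix e e *ᵥ a := by
  ext i
  simp only [Function.comp_apply, mulVec, dotProduct_comm (A (e i)), extend_zero_dotProduct]
  exact dotProduct_comm _ _

lemma PosSemidef.two_mul_dotProduct_sub_le [DecidableEq κ] {A : Matrix κ κ ℝ}
    (hA : A.PosSemidef) [Invertible A] (b x : κ → ℝ) :
    2 * (x ⬝ᵥ b) - x ⬝ᵥ (A *ᵥ x) ≤ b ⬝ᵥ (A⁻¹ *ᵥ b) := by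
  set u := A⁻¹ *ᵥ b
  have hAu : A *ᵥ u = b := by rw [mulVec_mulVec, mul_inv_of_invertible, one_mulVec]
  have hsymm : u ⬝ᵥ (A *ᵥ x) = x ⬝ᵥ b := by
    rw [dotProduct_mulVec, ← mulVec_transpose, ← conjTranspose_eq_transpose_of_trivial,
      hA.isHermitian.eq, hAu, dotProduct_comm]
  have hnonneg : 0 ≤ (u - x) ⬝ᵥ (A *ᵥ (u - x)) := by
    simpa only [star_trivial] using hA.dotProduct_mulVec_nonneg (u - x)
  rw [mulVec_sub, dotProduct_sub, sub_dotProduct, sub_dotProduct, hAu, hsymm,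
    dotProduct_comm u b] at hnonneg
  linarith

lemma PosSemidef.dotProduct_submatrix_inv_mulVec_le [DecidableEq ι] [DecidableEq κ]
    {A : Matrix κ κ ℝ} (hA : A.PosSemidef) [Invertible A] (e : ι ↪ κ) [Invertible (A.submatrix e e)] (b : κ → ℝ) :
    (b ∘ e) ⬝ᵥ ((A.submatrix e e)⁻¹ *ᵥ (b ∘ e)) ≤ b ⬝ᵥ (A⁻¹ *ᵥ b) := by
  set a := (A.submatrix e e)⁻¹ *ᵥ (b ∘ e)
  have hCa : A.submatrix e e *ᵥ a = b ∘ e := by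
    rw [mulVec_mulVec, mul_inv_of_invertible, one_mulVec]
  calc (b ∘ e) ⬝ᵥ a
      = 2 * (a ⬝ᵥ (b ∘ e)) - a ⬝ᵥ (A.submatrix e e *ᵥ a) := by
        rw [hCa, dotProduct_comm]; ring
    _ = 2 * (Function.extend e a 0 ⬝ᵥ b)
          - Function.extend e a 0 ⬝ᵥ (A *ᵥ Function.extend e a 0) := by
        rw [extend_zero_dotProduct, extend_zero_dotProduct, mulVec_extend_zero_comp]
    _ ≤ b ⬝ᵥ (A⁻¹ *ᵥ b) := hA.two_mul_dotProduct_sub_le b _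

end Matrix

lemma gram_toLp_apply {Ω ι : Type*} [MeasurableSpace Ω] {μ : Measure Ω} {h : ι → Ω → ℝ}
    (hh : ∀ i, MemLp (h i) 2 μ) (i j : ι) :
    gram ℝ (fun i => (hh i).toLp (h i)) i j = ∫ ω, h i ω * h j ω ∂μ := by
  rw [gram_apply, L2.inner_def]
  refine integral_congr_ae ?_
  filter_upwards [(hh i).coeFn_toLp, (hh j).coeFn_toLp] with ω hi hj
  rw [hi, hj, Real.inner_apply, mul_comm]

lemma posSemidef_of_integral_mul {Ω ι : Type*} [Finite ι] [MeasurableSpace Ω] {μ : Measure Ω}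
    {h : ι → Ω → ℝ} (hh : ∀ i, MemLp (h i) 2 μ) {C : Matrix ι ι ℝ}
    (hC : ∀ i j, C i j = ∫ ω, h i ω * h j ω ∂μ) : C.PosSemidef := by
  have hgram : C = gram ℝ (fun i => (hh i).toLp (h i)) := by
    ext i j
    rw [hC, gram_toLp_apply]
  rw [hgram]
  exact posSemidef_gram ℝ _

theorem stmt_9_general {Ω : Type*} [MeasurableSpace Ω] (μ : Measure Ω)
    {k m : ℕ} (hkm : k ≤ m)
    (h' : Fin m → Ω → ℝ)
    (hh : ∀ i, MemLp (h' i) 2 μ)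
    (C' : Matrix (Fin m) (Fin m) ℝ)
    (hC' : ∀ i j, C' i j = ∫ ω, h' i ω * h' j ω ∂μ) [Invertible C']
    (b' : Fin m → ℝ)
    (C : Matrix (Fin k) (Fin k) ℝ)
    (hC : ∀ i j, C i j = C' (Fin.castLE hkm i) (Fin.castLE hkm j)) [Invertible C]
    (b : Fin k → ℝ) (hb : ∀ i, b i = b' (Fin.castLE hkm i)) :
    b ⬝ᵥ (C⁻¹ *ᵥ b) ≤ b' ⬝ᵥ (C'⁻¹ *ᵥ b') := by
  obtain rfl : C = C'.submatrix (Fin.castLEEmb hkm) (Fin.castLEEmb hkm) := Matrix.ext hC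
  obtain rfl : b = b' ∘ Fin.castLEEmb hkm := funext hb
  exact (posSemidef_of_integral_mul hh hC').dotProduct_submatrix_inv_mulVec_le _ b'

/-- Monotonicity of the optimal information `bᵀC⁻¹b` in the number of
component estimating functions: if `h` is a truncation of `h'`, then
`bᵀC⁻¹b ≤ b'ᵀC'⁻¹b'`. -/
theorem stmt_9 {Ω : Type*} [MeasurableSpace Ω] (μ : Measure Ω)
    [IsProbabilityMeasure μ] {k m : ℕ} (hkm : k ≤ m)
    (X : Ω → ℝ) (h' : Fin m → Ω → ℝ)
    (hX : MemLp X 2 μ) (hh : ∀ i, MemLp (h' i) 2 μ)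
    (hmean : ∀ i, ∫ ω, h' i ω ∂μ = 0)
    (C' : Matrix (Fin m) (Fin m) ℝ)
    (hC' : ∀ i j, C' i j = ∫ ω, h' i ω * h' j ω ∂μ) [Invertible C']
    (b' : Fin m → ℝ) (hb' : ∀ i, b' i = ∫ ω, X ω * h' i ω ∂μ)
    (C : Matrix (Fin k) (Fin k) ℝ)
    (hC : ∀ i j, C i j = C' (Fin.castLE hkm i) (Fin.castLE hkm j)) [Invertible C]
    (b : Fin k → ℝ) (hb : ∀ i, b i = b' (Fin.castLE hkm i)) :
    b ⬝ᵥ (C⁻¹ *ᵥ b) ≤ b' ⬝ᵥ (C'⁻¹ *ᵥ b') :=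
  stmt_9_general μ hkm h' hh C' hC' b' C hC b hb
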